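/- Let D : abᵒᵖ × ab → Ab be a bifunctor with values in abelian groups which is additive in each variable separately, and set M = D(ℤ, ℤ). Then D is naturally isomorphic (naturally in both variables) to the bifunctor (A, B) ↦ Hom_{Ab}(A, B ⊗_ℤ M). -/

import Mathlib

/-!
Every object of `ab` is a finite direct sum of copies of `ℤ`, with projections and inclusions
given by a basis. An additive functor on `ab` is therefore determined by its value at `ℤ`: for
covariant `F` the map `B ⊗ F(ℤ) → F(B)`, `b ⊗ m ↦ F(b̂) m`, and for contravariant `G` the map
`G(A) → Hom(A, G(ℤ))`, `x ↦ (a ↦ G(â) x)`, where `b̂ : ℤ → B` sends `1` to `b`, are bijective at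
`ℤ` and compatible with these decompositions, hence bijective everywhere. Applying the second to
`D(-, B)` and then the inverse of the first to `D(ℤ, -)` gives
`D(A, B) ≅ Hom(A, D(ℤ, B)) ≅ Hom(A, B ⊗ D(ℤ, ℤ))`, natural in both variables.
-/

open CategoryTheory Opposite

/-- `ab`: the full subcategory of abelian groups whose objects are the finitely generated
free abelian groups `ℤ^n`, `n ∈ ℕ`. -/
abbrev ab : Type 1 :=
  ObjectProperty.FullSubcategory (fun A : AddCommGrpCat.{0} => ∃ n : ℕ, Nonempty (A ≃+ (Fin n → ℤ)))

/-- `ℤ = ℤ^1` as an object of `ab`. -/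
def abZ : ab :=
  ⟨AddCommGrpCat.of ℤ, 1,
    ⟨{ toFun := fun z _ => z
       invFun := fun f => f 0
       left_inv := fun _ => rfl
       right_inv := fun f => funext fun i => congrArg f (Subsingleton.elim _ _)
       map_add' := fun _ _ => rfl }⟩⟩

instance : Preadditive ab where
  homGroup A B := InducedCategory.homEquiv.addCommGroup
  add_comp _ _ _ f f' g := by apply ObjectProperty.hom_ext; exact Preadditive.add_comp _ _ _ f.hom f'.hom g.hom
  comp_add _ _ _ f g g' := by apply ObjectProperty.hom_ext; exact Preadditive.comp_add _ _ _ f.hom g.hom g'.hom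

open TensorProduct

theorem AddMonoidHom.bijective_of_compatible_decompositions {ι M N M₀ N₀ : Type*} [Fintype ι]
    [AddCommMonoid M] [AddCommMonoid N] [AddCommMonoid M₀] [AddCommMonoid N₀]
    (η : M →+ N) (η₀ : M₀ →+ N₀) (hη₀ : Function.Bijective η₀)
    (p : ι → M →+ M₀) (s : ι → M₀ →+ M) (q : ι → N →+ N₀) (t : ι → N₀ →+ N)
    (hsp : ∀ x, ∑ i, s i (p i x) = x) (htq : ∀ y, ∑ i, t i (q i y) = y)
    (hp : ∀ i x, q i (η x) = η₀ (p i x)) (hs : ∀ i x, η (s i x) = t i (η₀ x)) :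
    Function.Bijective η := by
  refine ⟨fun x x' h => ?_, fun y => ?_⟩
  · have hpx : ∀ i, p i x = p i x' := fun i => hη₀.injective (by rw [← hp, ← hp, h])
    rw [← hsp x, ← hsp x']
    simp only [hpx]
  · obtain ⟨σ, hσ⟩ := Function.bijective_iff_has_inverse.mp hη₀
    refine ⟨∑ i, s i (σ (q i y)), ?_⟩
    simp only [map_sum, hs, hσ.2 _, htq]

theorem CategoryTheory.Functor.sum_map_map_apply_of_sum_eq_id {C : Type*} [Category C]
    [Preadditive C] (F : C ⥤ AddCommGrpCat) [F.Additive] {X Y : C} {ι : Type*} (s : Finset ι)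
    (f : ι → (X ⟶ Y)) (g : ι → (Y ⟶ X)) (h : ∑ i ∈ s, f i ≫ g i = 𝟙 X) (x : F.obj X) :
    ∑ i ∈ s, F.map (g i) (F.map (f i) x) = x := by
  calc ∑ i ∈ s, F.map (g i) (F.map (f i) x)
      = AddCommGrpCat.homAddEquiv (∑ i ∈ s, F.map (f i ≫ g i)) x := by
        simp [AddMonoidHom.finsetSum_apply]
    _ = x := by rw [← F.map_sum, h, F.map_id]; rfl

namespace ab

lemma hom_ext {A B : ab} {f g : A ⟶ B} (h : ∀ a, f.hom.hom a = g.hom.hom a) : f = g :=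
  ObjectProperty.hom_ext _ (AddCommGrpCat.hom_ext (AddMonoidHom.ext h))

lemma hom_sum_apply {A B : ab} {ι : Type*} (s : Finset ι) (f : ι → (A ⟶ B)) (a : A.obj) :
    (∑ i ∈ s, f i).hom.hom a = ∑ i ∈ s, (f i).hom.hom a :=
  map_sum ((AddMonoidHom.eval a).comp
    (AddMonoidHom.mk' (fun f : A ⟶ B => f.hom.hom) fun _ _ => rfl)) f s

def ofElem {B : ab} : B.obj →+ (abZ ⟶ B) :=
  AddMonoidHom.mk' (fun b => ObjectProperty.homMk (AddCommGrpCat.ofHom (zmultiplesHom _ b)))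
    fun b b' => hom_ext fun z => zsmul_add b b' z

lemma ofElem_comp {B B' : ab} (b : B.obj) (g : B ⟶ B') :
    ofElem b ≫ g = ofElem (g.hom.hom b) :=
  hom_ext fun z => map_zsmul g.hom.hom z b

/-- `abZ.obj` is `ℤ` only after unfolding the non-reducible `abZ`, which `rw` and `simp` do not do;
integer arithmetic on elements of `abZ` goes through this named identification instead. -/
def intEquiv : abZ.obj ≃+ ℤ := AddEquiv.refl ℤ

lemma intEquiv_zsmul_symm_one (z : abZ.obj) : intEquiv z • intEquiv.symm 1 = z := by
  rw [← map_zsmul, zsmul_one, Int.cast_id, AddEquiv.symm_apply_apply]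

lemma ofElem_eq_zsmul_id (z : abZ.obj) : ofElem z = intEquiv z • 𝟙 abZ :=
  hom_ext fun w => mul_comm (G := ℤ) w z

lemma ofElem_symm_one : ofElem (intEquiv.symm 1) = 𝟙 abZ := by
  rw [ofElem_eq_zsmul_id, AddEquiv.apply_symm_apply, one_smul]

noncomputable def basis (A : ab) : Module.Basis (Fin A.property.choose) ℤ A.obj :=
  .ofEquivFun A.property.choose_spec.some.toIntLinearEquiv

noncomputable def coord (A : ab) (i : Fin A.property.choose) : A ⟶ abZ :=
  ObjectProperty.homMk (AddCommGrpCat.ofHom (A.basis.coord i).toAddMonoidHom)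

lemma sum_ofElem_basis_coord_apply (A : ab) (a : A.obj) :
    ∑ i, (ofElem (A.basis i)).hom.hom ((A.coord i).hom.hom a) = a :=
  A.basis.sum_repr a

lemma sum_coord_comp_ofElem_basis (A : ab) : ∑ i, A.coord i ≫ ofElem (A.basis i) = 𝟙 A :=
  hom_ext fun a => (hom_sum_apply _ _ a).trans (sum_ofElem_basis_coord_apply A a)

section Covariant

variable (F : ab ⥤ AddCommGrpCat.{0}) [F.Additive]

noncomputable def tensorToObj (B : ab) : B.obj ⊗[ℤ] F.obj abZ →+ F.obj B :=
  liftAddHom (AddCommGrpCat.homAddEquiv.toAddMonoidHom.comp (F.mapAddHom.comp ofElem))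
    fun z b m => by
      change (F.map (ofElem (z • b))) m = F.map (ofElem b) (z • m)
      rw [map_zsmul, F.map_zsmul, map_zsmul]
      rfl

lemma tensorToObj_tmul (B : ab) (b : B.obj) (m : F.obj abZ) :
    tensorToObj F B (b ⊗ₜ m) = F.map (ofElem b) m := rfl

lemma tensorToObj_naturality {B B' : ab} (g : B ⟶ B') (x : B.obj ⊗[ℤ] F.obj abZ) :
    tensorToObj F B' (map g.hom.hom.toIntLinearMap LinearMap.id x) =
      F.map g (tensorToObj F B x) := by
  induction x using TensorProduct.induction_on with
  | zero => simp
  | tmul b m =>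
    rw [map_tmul, tensorToObj_tmul, tensorToObj_tmul, ← ConcreteCategory.comp_apply, ← F.map_comp,
      ofElem_comp]
    rfl
  | add x x' hx hx' => simp only [map_add, hx, hx']

lemma tensorToObj_abZ_tmul (z : abZ.obj) (m : F.obj abZ) :
    tensorToObj F abZ (z ⊗ₜ m) = intEquiv z • m := by
  rw [tensorToObj_tmul, ofElem_eq_zsmul_id, F.map_zsmul, F.map_id]
  rfl

lemma tensorToObj_abZ_bijective : Function.Bijective (tensorToObj F abZ) := by
  refine Function.bijective_iff_has_inverse.mpr
    ⟨mk ℤ abZ.obj (F.obj abZ) (intEquiv.symm 1), fun x => ?_, fun m => ?_⟩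
  · induction x using TensorProduct.induction_on with
    | zero => exact tmul_zero _ _
    | tmul z m =>
      rw [mk_apply, tensorToObj_abZ_tmul, ← smul_tmul, intEquiv_zsmul_symm_one]
    | add x x' hx hx' => rw [map_add, map_add, hx, hx']
  · rw [mk_apply, tensorToObj_abZ_tmul, AddEquiv.apply_symm_apply, one_smul]

lemma tensorToObj_bijective (B : ab) : Function.Bijective (tensorToObj F B) := by
  refine AddMonoidHom.bijective_of_compatible_decompositions _ _ (tensorToObj_abZ_bijective F)
    (fun i => (map (B.coord i).hom.hom.toIntLinearMap LinearMap.id).toAddMonoidHom)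
    (fun i => (map (ofElem (B.basis i)).hom.hom.toIntLinearMap LinearMap.id).toAddMonoidHom)
    (fun i => (F.map (B.coord i)).hom) (fun i => (F.map (ofElem (B.basis i))).hom) (fun x => ?_)
    (F.sum_map_map_apply_of_sum_eq_id _ _ _ B.sum_coord_comp_ofElem_basis)
    (fun i x => (tensorToObj_naturality F _ x).symm) (fun i x => tensorToObj_naturality F _ x)
  induction x using TensorProduct.induction_on with
  | zero => simp
  | tmul b m =>
    simp only [LinearMap.toAddMonoidHom_coe, map_tmul]
    rw [← sum_tmul]
    exact congrArg (· ⊗ₜ m) (B.sum_ofElem_basis_coord_apply b)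
  | add x x' hx hx' => simp only [map_add, Finset.sum_add_distrib, hx, hx']

noncomputable def tensorEquivObj (B : ab) : B.obj ⊗[ℤ] F.obj abZ ≃+ F.obj B :=
  AddEquiv.ofBijective _ (tensorToObj_bijective F B)

lemma tensorEquivObj_symm_naturality {B B' : ab} (g : B ⟶ B') (y : F.obj B) :
    (tensorEquivObj F B').symm (F.map g y) =
      map g.hom.hom.toIntLinearMap LinearMap.id ((tensorEquivObj F B).symm y) := by
  rw [AddEquiv.symm_apply_eq]
  conv_lhs => rw [← (tensorEquivObj F B).apply_symm_apply y]
  exact (tensorToObj_naturality F g _).symm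

end Covariant

section Contravariant

variable (G : abᵒᵖ ⥤ AddCommGrpCat.{0}) [G.Additive]

noncomputable def objToHom (A : ab) : G.obj (op A) →+ A.obj →+ G.obj (op abZ) :=
  (AddCommGrpCat.homAddEquiv.toAddMonoidHom.comp
    (G.mapAddHom.comp ((opHom abZ A).comp ofElem))).flip

lemma objToHom_apply (A : ab) (x : G.obj (op A)) (a : A.obj) :
    objToHom G A x a = G.map (ofElem a).op x := rfl

lemma objToHom_naturality {A A' : ab} (f : A ⟶ A') (x : G.obj (op A')) :
    objToHom G A (G.map f.op x) = (objToHom G A' x).comp f.hom.hom := by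
  ext a
  rw [AddMonoidHom.comp_apply, objToHom_apply, objToHom_apply, ← ofElem_comp, op_comp,
    G.map_comp]
  rfl

lemma objToHom_natTrans_app {G' : abᵒᵖ ⥤ AddCommGrpCat.{0}} [G'.Additive] (τ : G ⟶ G') (A : ab)
    (x : G.obj (op A)) :
    objToHom G' A (τ.app (op A) x) = (τ.app (op abZ)).hom.comp (objToHom G A x) := by
  ext a
  rw [AddMonoidHom.comp_apply, objToHom_apply, objToHom_apply, ← ConcreteCategory.comp_apply,
    ← τ.naturality]
  rfl

lemma objToHom_abZ_bijective : Function.Bijective (objToHom G abZ) := by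
  refine Function.bijective_iff_has_inverse.mpr
    ⟨AddMonoidHom.eval (intEquiv.symm 1), fun x => ?_, fun k => ?_⟩
  · rw [AddMonoidHom.eval_apply_apply, objToHom_apply, ofElem_symm_one, op_id, G.map_id]
    rfl
  · ext z
    rw [AddMonoidHom.eval_apply_apply, objToHom_apply, ofElem_eq_zsmul_id, op_zsmul, G.map_zsmul,
      op_id, G.map_id]
    change intEquiv z • k (intEquiv.symm 1) = k z
    rw [← map_zsmul, intEquiv_zsmul_symm_one]

lemma objToHom_bijective (A : ab) : Function.Bijective (objToHom G A) := by
  refine AddMonoidHom.bijective_of_compatible_decompositions _ _ (objToHom_abZ_bijective G)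
    (fun i => (G.map (ofElem (A.basis i)).op).hom) (fun i => (G.map (A.coord i).op).hom)
    (fun i => AddMonoidHom.compHom' (ofElem (A.basis i)).hom.hom)
    (fun i => AddMonoidHom.compHom' (A.coord i).hom.hom)
    (G.sum_map_map_apply_of_sum_eq_id _ _ _ ?_) (fun k => ?_)
    (fun i x => (objToHom_naturality G _ x).symm) (fun i x => objToHom_naturality G _ x)
  · simp only [← op_comp]
    rw [← op_sum, sum_coord_comp_ofElem_basis, op_id]
  · ext a
    rw [AddMonoidHom.finsetSum_apply]
    change ∑ i, k ((ofElem (A.basis i)).hom.hom ((A.coord i).hom.hom a)) = k a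
    rw [← map_sum, sum_ofElem_basis_coord_apply]

end Contravariant

section Bifunctor

variable (D : abᵒᵖ ⥤ ab ⥤ AddCommGrpCat.{0}) [∀ B, (D.flip.obj B).Additive]
  [(D.obj (op abZ)).Additive]

noncomputable def homTensorEquiv (A B : ab) :
    (D.obj (op A)).obj B ≃+ (A.obj →+ B.obj ⊗[ℤ] (D.obj (op abZ)).obj abZ) :=
  (AddEquiv.ofBijective _ (objToHom_bijective (D.flip.obj B) A)).trans
    (tensorEquivObj (D.obj (op abZ)) B).symm.addMonoidHomCongrRight

lemma homTensorEquiv_apply (A B : ab) (x : (D.obj (op A)).obj B) (a : A.obj) :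
    homTensorEquiv D A B x a =
      (tensorEquivObj (D.obj (op abZ)) B).symm (objToHom (D.flip.obj B) A x a) := rfl

lemma homTensorEquiv_naturality_left {A A' : ab} (B : ab) (f : A ⟶ A')
    (x : (D.obj (op A')).obj B) :
    homTensorEquiv D A B ((D.map f.op).app B x) = (homTensorEquiv D A' B x).comp f.hom.hom := by
  ext a
  rw [AddMonoidHom.comp_apply, homTensorEquiv_apply, homTensorEquiv_apply]
  exact congrArg _ (DFunLike.congr_fun (objToHom_naturality (D.flip.obj B) f x) a)

lemma homTensorEquiv_naturality_right (A : ab) {B B' : ab} (g : B ⟶ B')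
    (x : (D.obj (op A)).obj B) :
    homTensorEquiv D A B' ((D.obj (op A)).map g x) =
      (map g.hom.hom.toIntLinearMap LinearMap.id).toAddMonoidHom.comp (homTensorEquiv D A B x) := by
  ext a
  rw [AddMonoidHom.comp_apply, homTensorEquiv_apply, homTensorEquiv_apply]
  exact (congrArg _ (DFunLike.congr_fun (objToHom_natTrans_app _ (D.flip.map g) A x) a)).trans
    (tensorEquivObj_symm_naturality _ g _)

end Bifunctor
end ab

/-- A bifunctor `D : abᵒᵖ × ab → Ab` which is additive in each variable separately is
naturally isomorphic (naturally in both variables) to `(A, B) ↦ Hom_{Ab}(A, B ⊗_ℤ M)`,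
where `M = D(ℤ, ℤ)`. -/
theorem biadditive_bifunctor_iso_hom_tensor
    (D : abᵒᵖ ⥤ ab ⥤ AddCommGrpCat.{0})
    (h₂ : ∀ A : abᵒᵖ, (D.obj A).Additive)
    (h₁ : ∀ B : ab, (D.flip.obj B).Additive) :
    ∃ iso : ∀ A B : ab,
        (((D.obj (op A)).obj B : Type) ≃+
          ((A.obj : Type) →+
            TensorProduct ℤ (B.obj : Type) (((D.obj (op abZ)).obj abZ : Type)))),
      (∀ (A A' B : ab) (f : A ⟶ A') (x : ((D.obj (op A')).obj B : Type)),
          iso A B ((D.map f.op).app B x) =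
            (iso A' B x).comp (show (A.obj : Type) →+ (A'.obj : Type) from f.hom.hom)) ∧
      (∀ (A B B' : ab) (g : B ⟶ B') (x : ((D.obj (op A)).obj B : Type)),
          iso A B' (((D.obj (op A)).map g) x) =
            AddMonoidHom.comp
              (TensorProduct.map
                (show (B.obj : Type) →+ (B'.obj : Type) from g.hom.hom).toIntLinearMap
                LinearMap.id).toAddMonoidHom
              (iso A B x)) := by
  have := h₂ (op abZ)
  have (B : ab) : (D.flip.obj B).Additive := h₁ B
  exact ⟨ab.homTensorEquiv D, fun A A' B => ab.homTensorEquiv_naturality_left D B,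
    fun A B B' => ab.homTensorEquiv_naturality_right D A⟩
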